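/- arXiv:1706.03158 — 5 statements merged into one kernel-verified Lean document; each statement's English description precedes it below -/
import Mathlib

section
/- Let Q be an n×n column-stochastic matrix (nonnegative entries, columns summing to 1) all of whose entries are strictly greater than ε/n for some ε > 0. If α and β are nonnegative vectors in ℝⁿ with ‖α‖₁ = ‖β‖₁ = γ, then ‖Qβ - Qα‖₁ ≤ 2γ(1 - ε). -/
/-! Since `β - α` has total mass zero, `Q(β - α) = A(β - α)` for `A = Q - (ε/n)·J`, where `J` is
the all-ones matrix. `A` is still nonnegative and each of its columns sums to `1 - ε`, so it shrinks
the ℓ₁ norm by the factor `1 - ε`, and `‖β - α‖₁ ≤ ‖β‖₁ + ‖α‖₁ = 2γ`. -/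

open Finset

namespace Matrix

variable {m n : Type*} [Fintype n]

theorem sum_abs_mulVec_le_sum_colSum_mul_abs [Fintype m] (A : Matrix m n ℝ)
    (hA : ∀ i j, 0 ≤ A i j) (x : n → ℝ) : ∑ i, |(A *ᵥ x) i| ≤ ∑ j, (∑ i, A i j) * |x j| :=
  calc ∑ i, |(A *ᵥ x) i|
      ≤ ∑ i, ∑ j, A i j * |x j| := sum_le_sum fun i _ =>
        (abs_sum_le_sum_abs _ _).trans_eq <|
          sum_congr rfl fun j _ => by rw [abs_mul, abs_of_nonneg (hA i j)]
    _ = ∑ j, (∑ i, A i j) * |x j| := by simp only [sum_comm (γ := n), sum_mul]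

theorem sub_const_mulVec_of_sum_eq_zero (A : Matrix m n ℝ) (c : ℝ) {x : n → ℝ}
    (hx : ∑ j, x j = 0) : (A - of fun _ _ => c) *ᵥ x = A *ᵥ x := by
  rw [sub_mulVec, sub_eq_self]
  ext i
  simp only [mulVec, dotProduct, of_apply, ← mul_sum, hx, mul_zero, Pi.zero_apply]

end Matrix

theorem stmt1_general (n : ℕ) (Q : Matrix (Fin n) (Fin n) ℝ) (ε γ : ℝ)
    (hQ1 : ∀ j, ∑ i, Q i j = 1)
    (hQε : ∀ i j, ε / (n : ℝ) < Q i j)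
    (α β : Fin n → ℝ) (hα0 : ∀ i, 0 ≤ α i) (hβ0 : ∀ i, 0 ≤ β i)
    (hα1 : ∑ i, |α i| = γ) (hβ1 : ∑ i, |β i| = γ) :
    ∑ i, |(Q.mulVec β - Q.mulVec α) i| ≤ 2 * γ * (1 - ε) := by
  set A : Matrix (Fin n) (Fin n) ℝ := Q - Matrix.of fun _ _ => ε / n
  have hA : ∀ i j, 0 ≤ A i j := fun i j => sub_nonneg.2 (hQε i j).le
  have hAcol : ∀ j, ∑ i, A i j = 1 - ε := fun j => by
    have hn : (n : ℝ) ≠ 0 := by exact_mod_cast (Fin.pos j).ne'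
    simp [A, sum_sub_distrib, hQ1, mul_div_cancel₀ _ hn]
  have hmass : ∑ j, (β - α) j = 0 := by
    have sum_eq_sum_abs : ∀ v : Fin n → ℝ, (∀ i, 0 ≤ v i) → ∑ i, v i = ∑ i, |v i| :=
      fun v hv => sum_congr rfl fun i _ => (abs_of_nonneg (hv i)).symm
    simp only [Pi.sub_apply, sum_sub_distrib]
    rw [sum_eq_sum_abs β hβ0, sum_eq_sum_abs α hα0, hα1, hβ1, sub_self]
  rw [← Matrix.mulVec_sub, ← Matrix.sub_const_mulVec_of_sum_eq_zero Q (ε / n) hmass]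
  calc ∑ i, |(A.mulVec (β - α)) i|
      ≤ ∑ j, (∑ i, A i j) * |(β - α) j| := A.sum_abs_mulVec_le_sum_colSum_mul_abs hA _
    _ ≤ ∑ j, (∑ i, A i j) * (|β j| + |α j|) :=
        sum_le_sum fun j _ =>
          mul_le_mul_of_nonneg_left (abs_sub _ _) (sum_nonneg fun i _ => hA i j)
    _ = 2 * γ * (1 - ε) := by simp only [hAcol, ← mul_sum, sum_add_distrib, hα1, hβ1]; ring

/-- A column-stochastic matrix all of whose entries exceed `ε/n` contracts pairs of
nonnegative vectors of equal ℓ₁-mass `γ`: `‖Qβ - Qα‖₁ ≤ 2γ(1 - ε)`. -/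
theorem stmt1 (n : ℕ) (Q : Matrix (Fin n) (Fin n) ℝ) (ε γ : ℝ) (hε : 0 < ε)
    (hQ0 : ∀ i j, 0 ≤ Q i j) (hQ1 : ∀ j, ∑ i, Q i j = 1)
    (hQε : ∀ i j, ε / (n : ℝ) < Q i j)
    (α β : Fin n → ℝ) (hα0 : ∀ i, 0 ≤ α i) (hβ0 : ∀ i, 0 ≤ β i)
    (hα1 : ∑ i, |α i| = γ) (hβ1 : ∑ i, |β i| = γ) :
    ∑ i, |(Q.mulVec β - Q.mulVec α) i| ≤ 2 * γ * (1 - ε) :=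
  stmt1_general n Q ε γ hQ1 hQε α β hα0 hβ0 hα1 hβ1
end

section
/- Let Q be an n×n matrix with real entries such that each column sums to 1. Then the maximum of ‖Qδ‖₁ over vectors δ with Σᵢ δᵢ = 0 and ‖δ‖₁ = 1 equals (1/2) · max over pairs (j,k) of Σᵢ |Qᵢⱼ - Qᵢₖ| (the Markov–Dobrushin coefficient). -/
/-!
Split `δ = δ⁺ - δ⁻`; when `∑ δ = 0` and `‖δ‖₁ = 1` both parts have mass `1/2`, and then
`Qδ = 2 ∑ⱼₖ δ⁺ⱼ δ⁻ₖ (Q·ⱼ - Q·ₖ)`, so `‖Qδ‖₁` is at most `2 · (1/2)² = 1/2` times the largest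
column distance. The bound is attained at `δ = (eⱼ - eₖ)/2` for a farthest pair of columns.
-/

open Finset Matrix

variable {ι κ : Type*} [Fintype κ]

lemma sum_mul_mulVec_sub_sum_mul_mulVec {R : Type*} [CommRing R] (Q : Matrix ι κ R)
    (p q : κ → R) (i : ι) :
    (∑ k, q k) * (Q *ᵥ p) i - (∑ j, p j) * (Q *ᵥ q) i
      = ∑ j, ∑ k, p j * q k * (Q i j - Q i k) := by
  simp only [mulVec, dotProduct, mul_sub, sum_sub_distrib, sum_mul_sum]
  congr 1
  · rw [sum_comm]
    exact sum_congr rfl fun _ _ => sum_congr rfl fun _ _ => by ring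
  · exact sum_congr rfl fun _ _ => sum_congr rfl fun _ _ => by ring

variable [Fintype ι]

lemma sum_abs_mulVec_sub_le_half_mul (Q : Matrix ι κ ℝ) {p q : κ → ℝ} (hp0 : 0 ≤ p)
    (hq0 : 0 ≤ q) (hp : ∑ j, p j = 1 / 2) (hq : ∑ k, q k = 1 / 2) {M : ℝ}
    (hM : ∀ j k, ∑ i, |Q i j - Q i k| ≤ M) :
    ∑ i, |(Q *ᵥ (p - q)) i| ≤ 1 / 2 * M := by
  have hpq : ∀ j k, 0 ≤ p j * q k := fun j k => mul_nonneg (hp0 j) (hq0 k)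
  have key : ∀ i, (Q *ᵥ (p - q)) i = 2 * ∑ j, ∑ k, p j * q k * (Q i j - Q i k) := fun i => by
    rw [← sum_mul_mulVec_sub_sum_mul_mulVec, hp, hq, mulVec_sub, Pi.sub_apply]
    ring
  calc ∑ i, |(Q *ᵥ (p - q)) i|
      ≤ ∑ i, 2 * ∑ j, ∑ k, p j * q k * |Q i j - Q i k| := by
        refine sum_le_sum fun i _ => ?_
        rw [key, abs_mul, abs_two]
        gcongr
        refine (abs_sum_le_sum_abs _ _).trans (sum_le_sum fun j _ => ?_)
        refine (abs_sum_le_sum_abs _ _).trans (sum_le_sum fun k _ => ?_)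
        rw [abs_mul, abs_of_nonneg (hpq j k)]
    _ = 2 * ∑ j, ∑ k, p j * q k * ∑ i, |Q i j - Q i k| := by
        rw [← mul_sum, sum_comm]
        refine congrArg _ (sum_congr rfl fun j _ => ?_)
        rw [sum_comm]
        simp only [mul_sum]
    _ ≤ 2 * ∑ j, ∑ k, p j * q k * M := by
        gcongr with j _ k _
        · exact hpq j k
        · exact hM j k
    _ = 1 / 2 * M := by
        simp only [← sum_mul, ← mul_sum, hp, hq]
        ring

lemma sum_abs_mulVec_le_half_mul (Q : Matrix ι κ ℝ) {δ : κ → ℝ} (h0 : ∑ j, δ j = 0)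
    (h1 : ∑ j, |δ j| = 1) {M : ℝ} (hM : ∀ j k, ∑ i, |Q i j - Q i k| ≤ M) :
    ∑ i, |(Q *ᵥ δ) i| ≤ 1 / 2 * M := by
  have hsub : ∑ j, (δ⁺ j - δ⁻ j) = 0 := by
    simpa only [Pi.posPart_apply, Pi.negPart_apply, posPart_sub_negPart]
  have hadd : ∑ j, (δ⁺ j + δ⁻ j) = 1 := by
    simpa only [Pi.posPart_apply, Pi.negPart_apply, posPart_add_negPart]
  rw [sum_sub_distrib] at hsub
  rw [sum_add_distrib] at hadd
  rw [← posPart_sub_negPart δ]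
  exact sum_abs_mulVec_sub_le_half_mul Q (posPart_nonneg δ) (negPart_nonneg δ)
    (by linarith) (by linarith) hM

lemma exists_sum_eq_zero_sum_abs_eq_one_mulVec_eq [DecidableEq κ] (Q : Matrix ι κ ℝ) {j k : κ}
    (hjk : j ≠ k) : ∃ δ : κ → ℝ, ∑ l, δ l = 0 ∧ ∑ l, |δ l| = 1 ∧
      ∑ i, |(Q *ᵥ δ) i| = 1 / 2 * ∑ i, |Q i j - Q i k| := by
  refine ⟨(1 / 2 : ℝ) • (Pi.single j 1 - Pi.single k 1), ?_, ?_, ?_⟩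
  · simp [← mul_sum, sum_sub_distrib]
  · rw [← add_sum_erase _ _ (mem_univ j),
      ← add_sum_erase _ _ (mem_erase.2 ⟨hjk.symm, mem_univ k⟩), sum_eq_zero fun l hl => ?_]
    · simp [hjk, hjk.symm]
      norm_num
    · obtain ⟨hlk, hlj⟩ : l ≠ k ∧ l ≠ j := by simpa using hl
      simp [hlk, hlj]
  · simp only [mulVec_smul, mulVec_sub, mulVec_single_one, Pi.smul_apply, Pi.sub_apply,
      col_apply, smul_eq_mul, abs_mul, ← mul_sum]
    norm_num

theorem stmt3_general (n : ℕ) (Q : Matrix (Fin n) (Fin n) ℝ) :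
    sSup {x : ℝ | ∃ δ : Fin n → ℝ,
        (∑ i, δ i = 0) ∧ (∑ i, |δ i| = 1) ∧ x = ∑ i, |Q.mulVec δ i|}
      = (1 / 2) * sSup {y : ℝ | ∃ j k : Fin n, y = ∑ i, |Q i j - Q i k|} := by
  set S := {x : ℝ | ∃ δ : Fin n → ℝ,
    (∑ i, δ i = 0) ∧ (∑ i, |δ i| = 1) ∧ x = ∑ i, |Q.mulVec δ i|}
  set T := {y : ℝ | ∃ j k : Fin n, y = ∑ i, |Q i j - Q i k|}
  have hT_bdd : BddAbove T :=
    ((Set.finite_range fun jk : Fin n × Fin n => ∑ i, |Q i jk.1 - Q i jk.2|).subset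
      (by rintro _ ⟨j, k, rfl⟩; exact ⟨(j, k), rfl⟩)).bddAbove
  have hS_le : ∀ x ∈ S, x ≤ 1 / 2 * sSup T := by
    rintro _ ⟨δ, h0, h1, rfl⟩
    exact sum_abs_mulVec_le_half_mul Q h0 h1 fun j k => le_csSup hT_bdd ⟨j, k, rfl⟩
  have hS_nonneg : 0 ≤ sSup S := Real.sSup_nonneg (by rintro _ ⟨δ, -, -, rfl⟩; positivity)
  have hT_nonneg : 0 ≤ sSup T := Real.sSup_nonneg (by rintro _ ⟨j, k, rfl⟩; positivity)
  have hT_le : sSup T ≤ 2 * sSup S := by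
    refine Real.sSup_le ?_ (by positivity)
    rintro _ ⟨j, k, rfl⟩
    rcases eq_or_ne j k with rfl | hjk
    · simpa using hS_nonneg
    obtain ⟨δ, h0, h1, hδ⟩ := exists_sum_eq_zero_sum_abs_eq_one_mulVec_eq Q hjk
    have : ∑ i, |(Q *ᵥ δ) i| ≤ sSup S := le_csSup ⟨_, hS_le⟩ ⟨δ, h0, h1, rfl⟩
    linarith
  exact le_antisymm (Real.sSup_le hS_le (by positivity)) (by linarith)

/-- The induced ℓ₁-norm of a matrix with unit column sums, restricted to the tangent
space `{δ : ∑ δᵢ = 0}`, equals half the maximal ℓ₁-distance between pairs of columns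
(the Markov–Dobrushin coefficient). -/
theorem stmt3 (n : ℕ) (hn : 0 < n) (Q : Matrix (Fin n) (Fin n) ℝ)
    (hQ1 : ∀ j, ∑ i, Q i j = 1) :
    sSup {x : ℝ | ∃ δ : Fin n → ℝ,
        (∑ i, δ i = 0) ∧ (∑ i, |δ i| = 1) ∧ x = ∑ i, |Q.mulVec δ i|}
      = (1 / 2) * sSup {y : ℝ | ∃ j k : Fin n, y = ∑ i, |Q i j - Q i k|} :=
  stmt3_general n Q
end

section
/- Fix γ ∈ (0,1] and let C be an n×n row-stochastic matrix. Define f : Sₙ₋₁ → Sₙ₋₁ by f(p)ⱼ = (1 − e^{−γpⱼ})pⱼ + Σᵢ Cᵢⱼ e^{−γpᵢ} pᵢ. Then f is a contraction in the ℓ₁ norm: for all probability vectors p, q, ‖f(q) − f(p)‖₁ ≤ ‖q − p‖₁. -/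
/-!
Write `g(x) = x e^{-γx}`, so that `f(p) = (p - g ∘ p) + (g ∘ p) ᵥ* C`. On `[0, 1]` both `g` and
`x ↦ x - g x` are nondecreasing (the first because `γ ≤ 1`), so every coordinate difference splits
exactly as `|qⱼ - pⱼ| = |Δ(x - g x)| + |Δg|`. The first part passes through `f` unchanged and the
second is mixed by `Cᵀ`, which does not increase the ℓ₁ norm because the rows of `C` sum to `1`.
-/

open Real Finset Matrix

theorem sum_abs_vecMul_le {m n : Type*} [Fintype m] [Fintype n] (C : Matrix m n ℝ)
    (hC0 : ∀ i j, 0 ≤ C i j) (hC1 : ∀ i, ∑ j, C i j = 1) (x : m → ℝ) :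
    ∑ j, |(x ᵥ* C) j| ≤ ∑ i, |x i| :=
  calc ∑ j, |(x ᵥ* C) j| ≤ ∑ j, ∑ i, |x i| * C i j := by
        refine sum_le_sum fun j _ => (abs_sum_le_sum_abs _ _).trans_eq ?_
        simp only [abs_mul, abs_of_nonneg (hC0 _ j)]
    _ = ∑ i, |x i| := by
        rw [sum_comm]
        simp only [← mul_sum, hC1, mul_one]

theorem abs_sub_eq_abs_sub_add_abs_sub_of_monotoneOn {s : Set ℝ} {g : ℝ → ℝ}
    (hg : MonotoneOn g s) (hg' : MonotoneOn (fun x => x - g x) s) {x y : ℝ}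
    (hx : x ∈ s) (hy : y ∈ s) :
    |x - y| = |(x - g x) - (y - g y)| + |g x - g y| := by
  rcases le_total y x with hyx | hxy
  · have h := hg hy hx hyx
    have h' := hg' hy hx hyx
    simp only at h'
    rw [abs_of_nonneg (by linarith), abs_of_nonneg (by linarith), abs_of_nonneg (by linarith)]
    ring
  · have h := hg hx hy hxy
    have h' := hg' hx hy hxy
    simp only at h'
    rw [abs_of_nonpos (by linarith), abs_of_nonpos (by linarith), abs_of_nonpos (by linarith)]
    ring

theorem sum_abs_sub_add_vecMul_le {m : Type*} [Fintype m] {s : Set ℝ} {g : ℝ → ℝ}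
    (hg : MonotoneOn g s) (hg' : MonotoneOn (fun x => x - g x) s)
    (C : Matrix m m ℝ) (hC0 : ∀ i j, 0 ≤ C i j) (hC1 : ∀ i, ∑ j, C i j = 1)
    {p q : m → ℝ} (hp : ∀ i, p i ∈ s) (hq : ∀ i, q i ∈ s) :
    ∑ j, |((q j - g (q j)) - (p j - g (p j))) + ((fun i => g (q i) - g (p i)) ᵥ* C) j|
      ≤ ∑ j, |q j - p j| :=
  calc _ ≤ ∑ j, |(q j - g (q j)) - (p j - g (p j))|
        + ∑ j, |((fun i => g (q i) - g (p i)) ᵥ* C) j| := by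
        rw [← sum_add_distrib]
        exact sum_le_sum fun j _ => abs_add_le _ _
    _ ≤ ∑ j, |(q j - g (q j)) - (p j - g (p j))| + ∑ j, |g (q j) - g (p j)| :=
        add_le_add le_rfl (sum_abs_vecMul_le C hC0 hC1 _)
    _ = ∑ j, |q j - p j| := by
        rw [← sum_add_distrib]
        exact sum_congr rfl fun j _ =>
          (abs_sub_eq_abs_sub_add_abs_sub_of_monotoneOn hg hg' (hq j) (hp j)).symm

theorem hasDerivAt_exp_neg_mul_mul (γ x : ℝ) :
    HasDerivAt (fun x => exp (-(γ * x)) * x) (exp (-(γ * x)) * (1 - γ * x)) x := by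
  have h := ((((hasDerivAt_id' x).const_mul γ).fun_neg).exp).fun_mul (hasDerivAt_id' x)
  exact h.congr_deriv (by ring)

theorem monotoneOn_exp_neg_mul_mul {γ : ℝ} (hγ : 0 < γ) :
    MonotoneOn (fun x => exp (-(γ * x)) * x) (Set.Icc 0 γ⁻¹) := by
  refine monotoneOn_of_hasDerivWithinAt_nonneg (convex_Icc _ _) (by fun_prop)
    (fun x _ => (hasDerivAt_exp_neg_mul_mul γ x).hasDerivWithinAt) fun x hx => ?_
  rw [interior_Icc] at hx
  have : γ * x ≤ 1 := (mul_le_mul_of_nonneg_left hx.2.le hγ.le).trans_eq (mul_inv_cancel₀ hγ.ne')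
  exact mul_nonneg (exp_pos _).le (by linarith)

theorem monotoneOn_sub_exp_neg_mul_mul {γ : ℝ} (hγ : 0 ≤ γ) :
    MonotoneOn (fun x => x - exp (-(γ * x)) * x) (Set.Ici 0) := by
  have h : (fun x => x - exp (-(γ * x)) * x) = (fun x => 1 - exp (-(γ * x))) * id := by
    ext x; simp only [Pi.mul_apply, id_eq]; ring
  have h_exp : MonotoneOn (fun x => 1 - exp (-(γ * x))) (Set.Ici 0) := fun x _ y _ hxy => by
    have : γ * x ≤ γ * y := by gcongr
    simp only [sub_le_sub_iff_left, exp_le_exp, neg_le_neg_iff, this]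
  rw [h]
  refine h_exp.mul monotoneOn_id (fun x hx => ?_) fun x hx => hx
  simp only [sub_nonneg, exp_le_one_iff, neg_nonpos]
  exact mul_nonneg hγ hx

/-- For `γ ∈ (0,1]` and `C` row-stochastic, the exponential-influence map
`f(p)ⱼ = (1 − e^{−γpⱼ})pⱼ + Σᵢ Cᵢⱼ e^{−γpᵢ} pᵢ` is an ℓ₁-contraction on the simplex. -/
theorem stmt7 (n : ℕ) (γ : ℝ) (hγ : γ ∈ Set.Ioc (0 : ℝ) 1)
    (C : Matrix (Fin n) (Fin n) ℝ)
    (hC0 : ∀ i j, 0 ≤ C i j) (hC1 : ∀ i, ∑ j, C i j = 1)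
    (f : (Fin n → ℝ) → (Fin n → ℝ))
    (hf : ∀ p j, f p j = (1 - Real.exp (-(γ * p j))) * p j
        + ∑ i, C i j * (Real.exp (-(γ * p i)) * p i)) :
    ∀ p q : Fin n → ℝ, (∀ i, 0 ≤ p i) → (∑ i, p i = 1) →
      (∀ i, 0 ≤ q i) → (∑ i, q i = 1) →
      ∑ j, |f q j - f p j| ≤ ∑ j, |q j - p j| := by
  intro p q hp hps hq hqs
  set g : ℝ → ℝ := fun x => exp (-(γ * x)) * x
  have hg : MonotoneOn g (Set.Icc 0 1) := (monotoneOn_exp_neg_mul_mul hγ.1).mono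
    (Set.Icc_subset_Icc_right ((one_le_inv₀ hγ.1).mpr hγ.2))
  have hg' : MonotoneOn (fun x => x - g x) (Set.Icc 0 1) :=
    (monotoneOn_sub_exp_neg_mul_mul hγ.1.le).mono Set.Icc_subset_Ici_self
  have hmem : ∀ r : Fin n → ℝ, (∀ i, 0 ≤ r i) → ∑ i, r i = 1 → ∀ i, r i ∈ Set.Icc (0 : ℝ) 1 :=
    fun r hr hrs i => ⟨hr i, hrs ▸ single_le_sum (fun j _ => hr j) (mem_univ i)⟩
  have hdiff : ∀ j, f q j - f p j = ((q j - g (q j)) - (p j - g (p j)))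
      + ((fun i => g (q i) - g (p i)) ᵥ* C) j := by
    intro j
    simp only [hf, vecMul, dotProduct, g, mul_comm _ (C _ j), mul_sub, sum_sub_distrib]
    ring
  simp only [hdiff]
  exact sum_abs_sub_add_vecMul_le hg hg' C hC0 hC1 (hmem p hp hps) (hmem q hq hqs)
end

section
/- Fix γ ∈ (0,1] and let C be an irreducible row-stochastic n×n matrix with Frobenius–Perron left eigenvector c (positive entries, Cᵀc = c, Σᵢ cᵢ = 1). If a probability vector p satisfies (diag(1 − e^{−γp}) + Cᵀ diag(e^{−γp})) p = p, then there exists κ > 0 with pᵢ e^{−γpᵢ} = κ cᵢ for all i. -/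
/-!
Set `qᵢ = pᵢ e^{-γpᵢ}`. Subtracting `(1 - e^{-γpⱼ}) pⱼ` from both sides of the fixed-point
equation leaves `Cᵀ q = q`, so `q` is a left fixed vector of `C`, just like `c`.
For an irreducible matrix every such vector is a multiple of the positive one `c`: with
`t = minᵢ qᵢ / cᵢ`, the vector `q - t c` is a nonnegative left fixed vector with a zero entry,
and irreducibility spreads that zero to every entry. Finally `t > 0` because `p ≥ 0` and `p ≠ 0`.
-/

open Matrix

namespace Matrix

variable {ι R : Type*} [Fintype ι] [DecidableEq ι]

theorem vecMul_pow_eq_self [Semiring R] {A : Matrix ι ι R} {v : ι → R} (hv : v ᵥ* A = v)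
    (m : ℕ) : v ᵥ* A ^ m = v := by
  induction m with
  | zero => exact vecMul_one v
  | succ m ih => rw [pow_succ, ← vecMul_vecMul, ih, hv]

variable [Field R] [LinearOrder R] [IsStrictOrderedRing R]

theorem IsIrreducible.eq_zero_of_vecMul_eq_self {A : Matrix ι ι R} (hA : A.IsIrreducible)
    {r : ι → R} (hr0 : 0 ≤ r) (hr : r ᵥ* A = r) {j : ι} (hj : r j = 0) : r = 0 := by
  funext i
  by_contra hri
  have hri : 0 < r i := (hr0 i).lt_of_ne' hri
  obtain ⟨m, -, hm⟩ := (isIrreducible_iff_exists_pow_pos hA.nonneg).1 hA i j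
  have hsum : ∑ k, r k * (A ^ m) k j = 0 := by
    rwa [← vecMul_pow_eq_self hr m] at hj
  have hterm : r i * (A ^ m) i j ≤ ∑ k, r k * (A ^ m) k j :=
    Finset.single_le_sum (fun k _ => mul_nonneg (hr0 k) (pow_apply_nonneg hA.nonneg m k j))
      (Finset.mem_univ i)
  linarith [mul_pos hri hm]

theorem IsIrreducible.exists_eq_smul_of_vecMul_eq_self {A : Matrix ι ι R}
    (hA : A.IsIrreducible) {c q : ι → R} (hc : ∀ i, 0 < c i) (hcA : c ᵥ* A = c)
    (hqA : q ᵥ* A = q) : ∃ t : R, q = t • c := by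
  cases isEmpty_or_nonempty ι
  · exact ⟨0, Subsingleton.elim _ _⟩
  obtain ⟨j, -, hj⟩ := Finset.univ.exists_min_image (fun i => q i / c i) Finset.univ_nonempty
  refine ⟨q j / c j, sub_eq_zero.1 (hA.eq_zero_of_vecMul_eq_self (j := j) ?_ ?_ ?_)⟩
  · intro i
    simpa using (le_div_iff₀ (hc i)).1 (hj i (Finset.mem_univ i))
  · rw [sub_vecMul, smul_vecMul, hqA, hcA]
  · simp [div_mul_cancel₀ _ (hc j).ne']

end Matrix

theorem stmt8_general (n : ℕ) (γ : ℝ)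
    (C : Matrix (Fin n) (Fin n) ℝ)
    (hC0 : ∀ i j, 0 ≤ C i j)
    (hirr : ∀ i j, ∃ m : ℕ, 0 < m ∧ 0 < (C ^ m) i j)
    (c : Fin n → ℝ) (hc0 : ∀ i, 0 < c i)
    (hcC : Cᵀ.mulVec c = c)
    (p : Fin n → ℝ) (hp0 : ∀ i, 0 ≤ p i) (hp1 : ∑ i, p i = 1)
    (hfix : ∀ j, (1 - Real.exp (-(γ * p j))) * p j
        + ∑ i, C i j * (Real.exp (-(γ * p i)) * p i) = p j) :
    ∃ κ : ℝ, 0 < κ ∧ ∀ i, p i * Real.exp (-(γ * p i)) = κ * c i := by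
  set q : Fin n → ℝ := fun i => p i * Real.exp (-(γ * p i)) with hq
  have hC : C.IsIrreducible :=
    (isIrreducible_iff_exists_pow_pos hC0).2 fun i j => (hirr i j).imp fun _ => id
  have hqC : q ᵥ* C = q := by
    funext j
    have h := hfix j
    simp only [vecMul, dotProduct, hq, mul_comm (p _), mul_comm _ (C _ _)] at h ⊢
    linarith
  obtain ⟨t, hqt⟩ :=
    hC.exists_eq_smul_of_vecMul_eq_self hc0 (by rwa [mulVec_transpose] at hcC) hqC
  obtain ⟨i, -, hpi⟩ := Finset.exists_ne_zero_of_sum_ne_zero (hp1 ▸ one_ne_zero)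
  have hqi : 0 < t * c i := by
    rw [← smul_eq_mul, ← Pi.smul_apply, ← hqt]
    exact mul_pos ((hp0 i).lt_of_ne' hpi) (Real.exp_pos _)
  exact ⟨t, pos_of_mul_pos_left hqi (hc0 i).le, fun i => congrFun hqt i⟩

/-- For `γ ∈ (0,1]` and `C` irreducible row-stochastic with positive left Perron vector
`c`, any fixed point `p` of `p ↦ (diag(1 − e^{−γp}) + Cᵀ diag(e^{−γp})) p` in the simplex
satisfies `pᵢ e^{−γpᵢ} = κ cᵢ` for some `κ > 0`. -/
theorem stmt8 (n : ℕ) (γ : ℝ) (hγ : γ ∈ Set.Ioc (0 : ℝ) 1)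
    (C : Matrix (Fin n) (Fin n) ℝ)
    (hC0 : ∀ i j, 0 ≤ C i j) (hC1 : ∀ i, ∑ j, C i j = 1)
    (hirr : ∀ i j, ∃ m : ℕ, 0 < m ∧ 0 < (C ^ m) i j)
    (c : Fin n → ℝ) (hc0 : ∀ i, 0 < c i) (hc1 : ∑ i, c i = 1)
    (hcC : Cᵀ.mulVec c = c)
    (p : Fin n → ℝ) (hp0 : ∀ i, 0 ≤ p i) (hp1 : ∑ i, p i = 1)
    (hfix : ∀ j, (1 - Real.exp (-(γ * p j))) * p j
        + ∑ i, C i j * (Real.exp (-(γ * p i)) * p i) = p j) :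
    ∃ κ : ℝ, 0 < κ ∧ ∀ i, p i * Real.exp (-(γ * p i)) = κ * c i :=
  stmt8_general n γ C hC0 hirr c hc0 hcC p hp0 hp1 hfix
end

section
/- Fix γ ∈ (0, 1/2] and let C be an n×n row-stochastic matrix. The Jacobian of the map f(p) = (diag(γp) + Cᵀ diag(1 − γp)) p at p ∈ Sₙ₋₁ is Q(p)ᵀ = diag(2γp) + Cᵀ diag(1 − 2γp), which is column-stochastic; consequently f is a contraction on Sₙ₋₁ in the ℓ₁ norm. -/
/-!
The map is quadratic, so its difference quotient is exact at the midpoint: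
`f q - f p = Q(m)ᵀ (q - p)` with `m = (p + q) / 2`. Since `2γ ≤ 1` and `m` lies in the simplex,
`Q(m)ᵀ = diag d + Cᵀ diag (1 - d)` with `0 ≤ d ≤ 1` is column-stochastic, and a column-stochastic
matrix does not increase the ℓ₁ norm.
-/

open Finset Matrix

namespace Matrix

variable {ι : Type*} [Fintype ι] [DecidableEq ι]

theorem sum_abs_mulVec_le_of_mem_colStochastic {M : Matrix ι ι ℝ}
    (hM : M ∈ colStochastic ℝ ι) (v : ι → ℝ) :
    ∑ j, |(M *ᵥ v) j| ≤ ∑ i, |v i| := calc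
  ∑ j, |(M *ᵥ v) j| ≤ ∑ j, (M *ᵥ fun i => |v i|) j := by
    refine sum_le_sum fun j _ => (abs_sum_le_sum_abs _ _).trans_eq (sum_congr rfl fun i _ => ?_)
    rw [abs_mul, abs_of_nonneg (nonneg_of_mem_colStochastic hM)]
  _ = ∑ i, |v i| := sum_mulVec_of_mem_colStochastic hM

theorem diagonal_add_transpose_mul_diagonal_mem_colStochastic {C : Matrix ι ι ℝ}
    (hC : C ∈ rowStochastic ℝ ι) {d : ι → ℝ} (hd : ∀ i, d i ∈ Set.Icc 0 1) :
    diagonal d + Cᵀ * diagonal (1 - d) ∈ colStochastic ℝ ι := by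
  rw [mem_colStochastic_iff_sum]
  refine ⟨fun j i => ?_, fun i => ?_⟩
  · have hCd := mul_nonneg (nonneg_of_mem_rowStochastic hC (i := i) (j := j))
      (sub_nonneg.2 (hd i).2)
    simp only [add_apply, diagonal_apply, mul_diagonal, transpose_apply, Pi.sub_apply,
      Pi.one_apply]
    split_ifs with h
    · subst h; linarith [(hd j).1]
    · linarith
  · simp [diagonal_apply, mul_diagonal, sum_add_distrib, ← sum_mul,
      sum_row_of_mem_rowStochastic hC]

end Matrix

section DeGrootFriedkin

variable {ι : Type*} [Fintype ι] [DecidableEq ι] (γ : ℝ) (C : Matrix ι ι ℝ)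

def degrootFriedkin (p : ι → ℝ) : ι → ℝ :=
  fun j => γ * p j * p j + ∑ i, C i j * ((1 - γ * p i) * p i)

def degrootFriedkinJacobian (p : ι → ℝ) : Matrix ι ι ℝ :=
  diagonal ((2 * γ) • p) + Cᵀ * diagonal (1 - (2 * γ) • p)

theorem degrootFriedkinJacobian_apply (p : ι → ℝ) (j i : ι) :
    degrootFriedkinJacobian γ C p j i
      = (if j = i then 2 * γ * p i else 0) + C i j * (1 - 2 * γ * p i) := by
  rcases eq_or_ne j i with rfl | h <;>
    simp [degrootFriedkinJacobian, mul_diagonal, mul_assoc, *]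

theorem hasFDerivAt_degrootFriedkin (p : ι → ℝ) :
    HasFDerivAt (degrootFriedkin γ C)
      (LinearMap.toContinuousLinearMap (degrootFriedkinJacobian γ C p).mulVecLin) p := by
  rw [hasFDerivAt_pi']
  intro j
  have hcoord := fun i => hasFDerivAt_apply (𝕜 := ℝ) i p
  have hcomp := (((hcoord j).const_mul γ).mul (hcoord j)).add
    (HasFDerivAt.fun_sum (u := univ) fun i _ =>
      ((((hasFDerivAt_const 1 p).sub ((hcoord i).const_mul γ)).mul (hcoord i)).const_mul (C i j)))
  refine hcomp.congr_fderiv (ContinuousLinearMap.ext fun v => ?_)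
  simp only [Pi.sub_apply, zero_sub, smul_neg, smul_add, sum_add_distrib, sum_neg_distrib,
    _root_.add_apply, _root_.smul_apply, ContinuousLinearMap.proj_apply, smul_eq_mul,
    _root_.sum_apply, _root_.neg_apply, ContinuousLinearMap.comp_apply,
    LinearMap.coe_toContinuousLinearMap', mulVecBilin_apply, mulVec, dotProduct,
    degrootFriedkinJacobian_apply, add_mul, ite_mul, zero_mul, sum_ite_eq, mem_univ, ↓reduceIte]
  rw [← sub_eq_add_neg, ← sum_sub_distrib]
  congr 1
  · ring
  · exact sum_congr rfl fun i _ => by ring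

theorem degrootFriedkin_sub_eq_jacobian_midpoint_mulVec (p q : ι → ℝ) (j : ι) :
    degrootFriedkin γ C q j - degrootFriedkin γ C p j
      = (degrootFriedkinJacobian γ C (midpoint ℝ p q) *ᵥ (q - p)) j := by
  simp only [degrootFriedkin, mulVec, dotProduct, midpoint_eq_smul_add, invOf_eq_inv, smul_add,
    degrootFriedkinJacobian_apply, Pi.add_apply, Pi.smul_apply, smul_eq_mul, Pi.sub_apply, add_mul,
    ite_mul, zero_mul, sum_add_distrib, sum_ite_eq, mem_univ, ↓reduceIte]
  rw [add_sub_add_comm, ← sum_sub_distrib]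
  congr 1
  · ring
  · exact sum_congr rfl fun i _ => by ring

variable {γ C}

theorem degrootFriedkinJacobian_mem_colStochastic (hγ : γ ∈ Set.Icc 0 (1 / 2))
    (hC : C ∈ rowStochastic ℝ ι) {p : ι → ℝ} (hp : p ∈ stdSimplex ℝ ι) :
    degrootFriedkinJacobian γ C p ∈ colStochastic ℝ ι := by
  refine diagonal_add_transpose_mul_diagonal_mem_colStochastic hC fun i => ?_
  have hpi := mem_Icc_of_mem_stdSimplex hp i
  rw [Pi.smul_apply, smul_eq_mul]
  constructor <;> nlinarith [hγ.1, hγ.2, hpi.1, hpi.2]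

theorem sum_abs_degrootFriedkin_sub_le (hγ : γ ∈ Set.Icc 0 (1 / 2))
    (hC : C ∈ rowStochastic ℝ ι) {p q : ι → ℝ} (hp : p ∈ stdSimplex ℝ ι)
    (hq : q ∈ stdSimplex ℝ ι) :
    ∑ j, |degrootFriedkin γ C q j - degrootFriedkin γ C p j| ≤ ∑ j, |q j - p j| := by
  simp_rw [degrootFriedkin_sub_eq_jacobian_midpoint_mulVec]
  exact sum_abs_mulVec_le_of_mem_colStochastic
    (degrootFriedkinJacobian_mem_colStochastic hγ hC
      ((convex_stdSimplex ℝ ι).midpoint_mem hp hq)) _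

end DeGrootFriedkin

/-- For `γ ∈ (0,1/2]` and `C` row-stochastic, the Jacobian of the one-step
DeGroot–Friedkin map `f(p) = (diag(γp) + Cᵀ diag(1 − γp)) p` at `p` in the simplex is
`Q(p)ᵀ = diag(2γp) + Cᵀ diag(1 − 2γp)`, which is column-stochastic; consequently `f`
is an ℓ₁-contraction on the simplex. -/
theorem stmt13 (n : ℕ) (γ : ℝ) (hγ : γ ∈ Set.Ioc (0 : ℝ) (1 / 2))
    (C : Matrix (Fin n) (Fin n) ℝ)
    (hC0 : ∀ i j, 0 ≤ C i j) (hC1 : ∀ i, ∑ j, C i j = 1)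
    (f : (Fin n → ℝ) → (Fin n → ℝ))
    (hf : ∀ p j, f p j = γ * p j * p j + ∑ i, C i j * ((1 - γ * p i) * p i)) :
    (∀ p : Fin n → ℝ, (∀ i, 0 ≤ p i) → (∑ i, p i = 1) →
      ∀ M : Matrix (Fin n) (Fin n) ℝ,
        (∀ j i, M j i = (if j = i then 2 * γ * p i else 0) + C i j * (1 - 2 * γ * p i)) →
        (∀ v : Fin n → ℝ, fderiv ℝ f p v = M.mulVec v) ∧
        (∀ j i, 0 ≤ M j i) ∧ (∀ i, ∑ j, M j i = 1)) ∧
    (∀ p q : Fin n → ℝ, (∀ i, 0 ≤ p i) → (∑ i, p i = 1) →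
      (∀ i, 0 ≤ q i) → (∑ i, q i = 1) →
      ∑ j, |f q j - f p j| ≤ ∑ j, |q j - p j|) := by
  have hγ' : γ ∈ Set.Icc 0 (1 / 2) := Set.Ioc_subset_Icc_self hγ
  have hC : C ∈ rowStochastic ℝ (Fin n) := mem_rowStochastic_iff_sum.2 ⟨hC0, hC1⟩
  obtain rfl : f = degrootFriedkin γ C := funext fun p => funext (hf p)
  refine ⟨fun p hp hps M hM => ?_, fun p q hp hps hq hqs =>
    sum_abs_degrootFriedkin_sub_le hγ' hC ⟨hp, hps⟩ ⟨hq, hqs⟩⟩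
  obtain rfl : M = degrootFriedkinJacobian γ C p :=
    Matrix.ext fun j i => (hM j i).trans (degrootFriedkinJacobian_apply γ C p j i).symm
  have hQ := mem_colStochastic_iff_sum.1
    (degrootFriedkinJacobian_mem_colStochastic hγ' hC ⟨hp, hps⟩)
  exact ⟨fun v => by rw [(hasFDerivAt_degrootFriedkin γ C p).fderiv]; rfl, hQ.1, hQ.2⟩
end
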